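/- Let f be analytic on an open set containing the closed disk of center c ∈ ℂ and radius R' with R' > R > 0, with |f(z)| ≤ M on the circle |z − c| = τR for some 1 < τ ≤ R'/R. Let A ∈ ℂ^{n×n} be banded with upper bandwidth β ≥ 1 and lower bandwidth γ ≥ 1, and suppose ‖((A − cI)/R)^j‖ ≤ 2 for all j ≥ 0 (e.g., when the field of values of A is contained in the disk of center c, radius R). Writing f(z) = ∑_j f_j ((z−c)/R)^j with f_j the Taylor coefficients of z ↦ f(c + Rz) at 0, one has for k ≠ ℓ: |(f(A))_{k,ℓ}| ≤ 2 (τ/(τ−1)) M (1/τ)^ξ, with ξ = ⌈(ℓ−k)/β⌉ if k < ℓ and ξ = ⌈(k−ℓ)/γ⌉ otherwise. -/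

import Mathlib

/-! The `j`-th power of a matrix with bandwidths `(β, γ)` has bandwidths `(jβ, jγ)`, so
`(B ^ j) k ℓ = 0` for `j < ξ` and `F k ℓ = ∑_{j ≥ ξ} f_j (B ^ j) k ℓ`. Each entry of `B ^ j` is
bounded by `‖B ^ j‖ ≤ 2`, and Cauchy's estimate for `z ↦ f (c + R z)` on the circle of radius `τ`
gives `‖f_j‖ ≤ M τ⁻ʲ`, so the tail is dominated by `2M ∑_{j ≥ ξ} τ⁻ʲ = 2M τ⁻ξ · τ / (τ - 1)`. -/

open scoped Matrix.Norms.L2Operator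

open Metric

theorem Nat.mul_lt_of_lt_ceilDiv {a b c : ℕ} (h : c < a ⌈/⌉ b) : c * b < a := by
  rcases Nat.eq_zero_or_pos b with rfl | hb
  · simp at h
  · by_contra! hle
    exact h.not_ge ((ceilDiv_le_iff_le_mul hb).2 (by rwa [mul_comm]))

namespace Matrix

theorem norm_apply_le_l2_opNorm {𝕜 m n : Type*} [RCLike 𝕜] [Fintype m] [Fintype n]
    [DecidableEq n] (A : Matrix m n 𝕜) (i : m) (j : n) : ‖A i j‖ ≤ ‖A‖ := by
  set x := EuclideanSpace.single j (1 : 𝕜)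
  set v := (EuclideanSpace.equiv m 𝕜).symm (A *ᵥ x)
  have hv : v i = A i j := by simp [v, x, mulVec_single]
  calc ‖A i j‖ = ‖v i‖ := by rw [hv]
    _ ≤ ‖v‖ := PiLp.norm_apply_le v i
    _ ≤ ‖A‖ * ‖x‖ := l2_opNorm_mulVec A x
    _ = ‖A‖ := by rw [PiLp.norm_single, norm_one, mul_one]

def IsBanded {α : Type*} [Zero α] {n : ℕ} (A : Matrix (Fin n) (Fin n) α) (β γ : ℕ) : Prop :=
  ∀ k ℓ : Fin n, ((ℓ : ℕ) - (k : ℕ) > β ∨ (k : ℕ) - (ℓ : ℕ) > γ) → A k ℓ = 0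

section IsBanded

variable {α : Type*} {n : ℕ} {A B : Matrix (Fin n) (Fin n) α} {β γ β' γ' : ℕ}

theorem isBanded_one [Zero α] [One α] : IsBanded (1 : Matrix (Fin n) (Fin n) α) β γ :=
  fun k ℓ h ↦ one_apply_ne (by rintro rfl; omega)

theorem IsBanded.smul {R : Type*} [Zero α] [SMulZeroClass R α] (hA : IsBanded A β γ) (r : R) :
    IsBanded (r • A) β γ :=
  fun k ℓ h ↦ by rw [smul_apply, hA k ℓ h, smul_zero]

theorem IsBanded.sub [SubtractionMonoid α] (hA : IsBanded A β γ) (hB : IsBanded B β γ) :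
    IsBanded (A - B) β γ :=
  fun k ℓ h ↦ by rw [sub_apply, hA k ℓ h, hB k ℓ h, sub_zero]

theorem IsBanded.mul [NonUnitalNonAssocSemiring α] (hA : IsBanded A β γ) (hB : IsBanded B β' γ') :
    IsBanded (A * B) (β + β') (γ + γ') := by
  intro k ℓ h
  rw [mul_apply]
  refine Finset.sum_eq_zero fun m _ ↦ ?_
  by_cases hm : (ℓ : ℕ) - (m : ℕ) > β' ∨ (m : ℕ) - (ℓ : ℕ) > γ'
  · rw [hB m ℓ hm, mul_zero]
  · rw [hA k m (by omega), zero_mul]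

theorem IsBanded.pow [Semiring α] (hA : IsBanded A β γ) (j : ℕ) :
    IsBanded (A ^ j) (j * β) (j * γ) := by
  induction j with
  | zero => rw [pow_zero]; exact isBanded_one
  | succ j ih => simpa [pow_succ, add_mul] using ih.mul hA

theorem IsBanded.pow_apply_eq_zero [Semiring α] (hA : IsBanded A β γ) {k ℓ : Fin n} {j : ℕ}
    (hj : j < if (k : ℕ) < (ℓ : ℕ) then ((ℓ : ℕ) - (k : ℕ)) ⌈/⌉ β
      else ((k : ℕ) - (ℓ : ℕ)) ⌈/⌉ γ) :
    (A ^ j) k ℓ = 0 :=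
  hA.pow j k ℓ <| by
    split_ifs at hj
    · exact .inl (Nat.mul_lt_of_lt_ceilDiv hj)
    · exact .inr (Nat.mul_lt_of_lt_ceilDiv hj)

end IsBanded

end Matrix

theorem HasSum.norm_le_of_eq_zero_of_norm_le_geometric {E : Type*} [SeminormedAddCommGroup E]
    {a : ℕ → E} {s : E} {C q : ℝ} {ξ : ℕ} (hs : HasSum a s) (hzero : ∀ j < ξ, a j = 0)
    (hbound : ∀ j, ‖a j‖ ≤ C * q ^ j) (hq₀ : 0 ≤ q) (hq₁ : q < 1) :
    ‖s‖ ≤ C * q ^ ξ * (1 - q)⁻¹ := by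
  have htail : HasSum (fun i ↦ a (i + ξ)) s := by
    simpa [Finset.sum_eq_zero fun j hj ↦ hzero j (Finset.mem_range.1 hj)] using
      (hasSum_nat_add_iff' ξ).mpr hs
  refine htail.norm_le_of_bounded ((hasSum_geometric_of_lt_one hq₀ hq₁).mul_left (C * q ^ ξ))
    fun i ↦ ?_
  rw [mul_assoc, ← pow_add, add_comm]
  exact hbound _

theorem DifferentiableOn.diffContOnCl_comp_mul_add {E : Type*} [NormedAddCommGroup E]
    [NormedSpace ℂ E] {f : ℂ → E} {c a : ℂ} {r : ℝ}
    (hf : DifferentiableOn ℂ f (closedBall c (‖a‖ * r))) :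
    DiffContOnCl ℂ (fun z ↦ f (c + a * z)) (ball 0 r) := by
  refine DifferentiableOn.diffContOnCl_ball (U := closedBall 0 r) ?_ subset_rfl
  refine hf.comp (by fun_prop) fun z hz ↦ ?_
  rw [mem_closedBall_zero_iff] at hz
  rw [mem_closedBall_iff_norm, add_sub_cancel_left, norm_mul]
  gcongr

theorem norm_iteratedDeriv_div_factorial_le {E : Type*} [NormedAddCommGroup E]
    [NormedSpace ℂ E] [CompleteSpace E] {g : ℂ → E} {w : ℂ} {r M : ℝ} (j : ℕ) (hr : 0 < r)
    (hg : DiffContOnCl ℂ g (ball w r)) (hM : ∀ z ∈ sphere w r, ‖g z‖ ≤ M) :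
    ‖(j.factorial : ℂ)⁻¹ • iteratedDeriv j g w‖ ≤ M / r ^ j := by
  rw [norm_smul, norm_inv, Complex.norm_natCast, inv_mul_le_iff₀ (by positivity), ← mul_div_assoc]
  exact Complex.norm_iteratedDeriv_le_of_forall_mem_sphere_norm_le j hr hg hM

theorem stmt_19_general {n : ℕ} (f : ℂ → ℂ) (c : ℂ) (R R' τ M : ℝ)
    (hR : 0 < R)
    (hf : AnalyticOnNhd ℂ f (Metric.closedBall c R'))
    (hτ : 1 < τ) (hτR : τ ≤ R' / R)
    (hM : ∀ z : ℂ, ‖z - c‖ = τ * R → ‖f z‖ ≤ M)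
    (A : Matrix (Fin n) (Fin n) ℂ) (β γ : ℕ)
    (hband : ∀ k ℓ : Fin n, ((ℓ : ℕ) - (k : ℕ) > β ∨ (k : ℕ) - (ℓ : ℕ) > γ) → A k ℓ = 0)
    (B : Matrix (Fin n) (Fin n) ℂ)
    (hB : B = ((R : ℂ))⁻¹ • (A - c • (1 : Matrix (Fin n) (Fin n) ℂ)))
    (hpow : ∀ j : ℕ, ‖B ^ j‖ ≤ 2)
    (fj : ℕ → ℂ)
    (hfj : ∀ j : ℕ, fj j = iteratedDeriv j (fun z : ℂ => f (c + (R : ℂ) * z)) 0 / j.factorial)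
    (F : Matrix (Fin n) (Fin n) ℂ)
    (hF : HasSum (fun j : ℕ => fj j • B ^ j) F)
    (k ℓ : Fin n)
    (ξ : ℕ)
    (hξ : ξ = if (k : ℕ) < (ℓ : ℕ) then ((ℓ : ℕ) - (k : ℕ)) ⌈/⌉ β
              else ((k : ℕ) - (ℓ : ℕ)) ⌈/⌉ γ) :
    ‖F k ℓ‖ ≤ 2 * (τ / (τ - 1)) * M * (1 / τ) ^ ξ := by
  have hτ₀ : 0 < τ := one_pos.trans hτ
  have hBband : Matrix.IsBanded B β γ := by
    rw [hB]
    exact (Matrix.IsBanded.sub hband (Matrix.isBanded_one.smul c)).smul _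
  have hg : DiffContOnCl ℂ (fun z ↦ f (c + R * z)) (ball 0 τ) := by
    refine (hf.differentiableOn.mono (closedBall_subset_closedBall ?_)).diffContOnCl_comp_mul_add
    rw [Complex.norm_real, Real.norm_of_nonneg hR.le, mul_comm]
    exact (le_div_iff₀ hR).1 hτR
  have hcoeff (j : ℕ) : ‖fj j‖ ≤ M / τ ^ j := by
    rw [hfj, div_eq_inv_mul, ← smul_eq_mul]
    refine norm_iteratedDeriv_div_factorial_le j hτ₀ hg fun z hz ↦ hM _ ?_
    rw [mem_sphere_zero_iff_norm] at hz
    rw [add_sub_cancel_left, norm_mul, Complex.norm_real, Real.norm_of_nonneg hR.le, hz, mul_comm]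
  have hentry : HasSum (fun j ↦ fj j * (B ^ j) k ℓ) (F k ℓ) := by
    simpa using Pi.hasSum.mp (Pi.hasSum.mp hF k) ℓ
  have hterm (j : ℕ) : ‖fj j * (B ^ j) k ℓ‖ ≤ 2 * M * (1 / τ) ^ j := by
    rw [norm_mul, one_div_pow, ← div_eq_mul_one_div, mul_comm 2, mul_div_right_comm]
    exact mul_le_mul (hcoeff j) ((Matrix.norm_apply_le_l2_opNorm _ k ℓ).trans (hpow j))
      (norm_nonneg _) ((norm_nonneg _).trans (hcoeff j))
  have hbound := hentry.norm_le_of_eq_zero_of_norm_le_geometric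
    (fun j hj ↦ by rw [hBband.pow_apply_eq_zero (hξ ▸ hj), mul_zero]) hterm
    (by positivity) ((div_lt_one hτ₀).2 hτ)
  convert hbound using 1
  field_simp

/-- Decay bound for `f(A)` when the field of values of the banded matrix `A` lies in the
disk `{|z-c| ≤ R}` (so that `‖((A-cI)/R)^j‖ ≤ 2`), `f` is analytic on a neighborhood of the
closed disk of radius `R' > R` and `|f| ≤ M` on the circle `|z-c| = τR`, `1 < τ ≤ R'/R`:
for `k ≠ ℓ`, `|(f(A))_{k,ℓ}| ≤ 2 (τ/(τ-1)) M (1/τ)^ξ`. -/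
theorem stmt_19 {n : ℕ} (f : ℂ → ℂ) (c : ℂ) (R R' τ M : ℝ)
    (hR : 0 < R) (hR' : R < R')
    (hf : AnalyticOnNhd ℂ f (Metric.closedBall c R'))
    (hτ : 1 < τ) (hτR : τ ≤ R' / R)
    (hM : ∀ z : ℂ, ‖z - c‖ = τ * R → ‖f z‖ ≤ M)
    (A : Matrix (Fin n) (Fin n) ℂ) (β γ : ℕ) (hβ : 1 ≤ β) (hγ : 1 ≤ γ)
    (hband : ∀ k ℓ : Fin n, ((ℓ : ℕ) - (k : ℕ) > β ∨ (k : ℕ) - (ℓ : ℕ) > γ) → A k ℓ = 0)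
    (B : Matrix (Fin n) (Fin n) ℂ)
    (hB : B = ((R : ℂ))⁻¹ • (A - c • (1 : Matrix (Fin n) (Fin n) ℂ)))
    (hpow : ∀ j : ℕ, ‖B ^ j‖ ≤ 2)
    (fj : ℕ → ℂ)
    (hfj : ∀ j : ℕ, fj j = iteratedDeriv j (fun z : ℂ => f (c + (R : ℂ) * z)) 0 / j.factorial)
    (F : Matrix (Fin n) (Fin n) ℂ)
    (hF : HasSum (fun j : ℕ => fj j • B ^ j) F)
    (k ℓ : Fin n) (hkl : k ≠ ℓ)
    (ξ : ℕ)
    (hξ : ξ = if (k : ℕ) < (ℓ : ℕ) then ((ℓ : ℕ) - (k : ℕ)) ⌈/⌉ β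
              else ((k : ℕ) - (ℓ : ℕ)) ⌈/⌉ γ) :
    ‖F k ℓ‖ ≤ 2 * (τ / (τ - 1)) * M * (1 / τ) ^ ξ :=
  stmt_19_general f c R R' τ M hR hf hτ hτR hM A β γ hband B hB hpow fj hfj F hF k ℓ ξ hξ
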